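/- Relative to the Hilbert polynomial P(m,n) = 3m + 2n + 1 on P^1 × P^1, the only wall for α-semi-stability of pairs is at α = 4. Concretely: suppose r, s, t are integers with 0 ≤ r ≤ 3, 0 ≤ s ≤ 2, (r,s) ∉ {(0,0), (3,2)}, and t ≥ r + s - rs. Then the equation (α + t)/(r + s) = (α + 1)/5 has a positive rational solution α if and only if (r, s, t) = (2, 2, 0), in which case α = 4. -/
import Mathlib


/-- Proposition `walls`: relative to `P(m,n) = 3m + 2n + 1` on `P^1 × P^1` there is only
one wall, at `α = 4`. Concretely, for integers `0 ≤ r ≤ 3`, `0 ≤ s ≤ 2`,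
`(r,s) ∉ {(0,0),(3,2)}` and `t ≥ r + s - rs`, the equation `(α+t)/(r+s) = (α+1)/5` has a
positive rational solution `α` iff `(r,s,t) = (2,2,0)`, and any positive solution is `α = 4`. -/
theorem stmt13 (r s t : ℤ) (hr0 : 0 ≤ r) (hr3 : r ≤ 3) (hs0 : 0 ≤ s) (hs2 : s ≤ 2)
    (h00 : (r, s) ≠ (0, 0)) (h32 : (r, s) ≠ (3, 2)) (ht : r + s - r * s ≤ t) :
    ((∃ α : ℚ, 0 < α ∧ (α + t) / ((r : ℚ) + s) = (α + 1) / 5)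
        ↔ (r = 2 ∧ s = 2 ∧ t = 0)) ∧
    (∀ α : ℚ, 0 < α → (α + t) / ((r : ℚ) + s) = (α + 1) / 5 → α = 4) := by
  have h00' : ¬(r = 0 ∧ s = 0) := by simpa [Prod.ext_iff] using h00
  have h32' : ¬(r = 3 ∧ s = 2) := by simpa [Prod.ext_iff] using h32
  have hc1 : 1 ≤ r + s := by omega
  have hc4 : r + s ≤ 4 := by omega
  have key : ∀ α : ℚ, 0 < α → (α + t) / ((r : ℚ) + s) = (α + 1) / 5 →
      r = 2 ∧ s = 2 ∧ t = 0 ∧ α = 4 := by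
    intro α hα heq
    have hcq : (0:ℚ) < (r:ℚ) + s := by
      have : (0:ℤ) < r + s := by omega
      exact_mod_cast this
    rw [div_eq_div_iff hcq.ne' (by norm_num : (5:ℚ) ≠ 0)] at heq
    have hcq4 : (r:ℚ) + s ≤ 4 := by exact_mod_cast hc4
    have h5t : 5 * t < r + s := by
      by_contra h
      push_neg at h
      have hq : ((r:ℚ) + s) ≤ 5 * t := by exact_mod_cast h
      nlinarith
    have hrst : r = 2 ∧ s = 2 ∧ t = 0 := by
      interval_cases r <;> interval_cases s <;> omega
    obtain ⟨hr, hs, ht0⟩ := hrst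
    refine ⟨hr, hs, ht0, ?_⟩
    subst hr; subst hs; subst ht0
    push_cast at heq
    linarith
  refine ⟨⟨fun ⟨α, hα, heq⟩ => ?_, fun ⟨hr, hs, ht0⟩ => ?_⟩, fun α hα heq => (key α hα heq).2.2.2⟩
  · obtain ⟨h1, h2, h3, _⟩ := key α hα heq
    exact ⟨h1, h2, h3⟩
  · subst hr; subst hs; subst ht0
    exact ⟨4, by norm_num, by norm_num⟩
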